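/- arXiv:1112.4011 — 2 statements merged into one kernel-verified Lean document; each statement's English description precedes it below -/
import Mathlib

section
/- Let ĝ, f̂ be negative reals and ĉ ∈ ℂ. Consider the 2×2 Lyapunov equation A*P + PA = -H*H with A = [[0,1],[ĝ,f̂]] and H = [ĉ, 0]. Then A is Hurwitz, and writing P = [[x, z],[z̄, y]], the solution satisfies y = |ĉ|²/(2·ĝ·f̂). -/
/-! The eigenvalues of `!![0, 1; g, f]` are the roots of `μ² - f μ - g`. A non-real root has
real part `f / 2 < 0`, and a real root cannot be `≥ 0` since then `μ² - f μ - g > 0`.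
The diagonal entries of the Lyapunov equation read `g (P₀₁ + P₁₀) = -|c|²` and
`P₀₁ + P₁₀ + 2 f P₁₁ = 0`; eliminating `P₀₁ + P₁₀` gives `P₁₁`. -/

open Matrix

theorem mem_spectrum_fin_two_companion_iff {K : Type*} [Field K] (a b μ : K) :
    μ ∈ spectrum K !![0, 1; a, b] ↔ μ ^ 2 - b * μ - a = 0 := by
  have hdet : (algebraMap K (Matrix (Fin 2) (Fin 2) K) μ - !![0, 1; a, b]).det
      = μ ^ 2 - b * μ - a := by
    rw [Algebra.algebraMap_eq_smul_one, Matrix.det_fin_two]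
    simp only [Fin.isValue, Matrix.sub_apply, Matrix.smul_apply, one_apply_eq, smul_eq_mul,
      mul_one, of_apply, cons_val', cons_val_zero, cons_val_fin_one, sub_zero, cons_val_one,
      ne_eq, zero_ne_one, not_false_eq_true, one_apply_ne, mul_zero, zero_sub, one_ne_zero,
      mul_neg, neg_mul, one_mul, neg_neg, sub_left_inj]
    ring
  rw [spectrum.mem_iff, isUnit_iff_isUnit_det, hdet, isUnit_iff_ne_zero, not_not]

theorem Complex.re_neg_of_sq_sub_mul_sub_eq_zero {a b : ℝ} (ha : a < 0) (hb : b < 0) {z : ℂ}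
    (hz : z ^ 2 - b * z - a = 0) : z.re < 0 := by
  have hre : z.re ^ 2 - z.im ^ 2 - b * z.re - a = 0 := by
    simpa [sq, Complex.mul_re] using congrArg Complex.re hz
  have him : z.im * (2 * z.re - b) = 0 := by
    have := congrArg Complex.im hz
    simp only [sq, Complex.sub_im, Complex.mul_im, Complex.ofReal_re, Complex.ofReal_im,
      Complex.zero_im] at this
    linear_combination this
  rcases mul_eq_zero.mp him with h | h
  · nlinarith
  · linarith

theorem lyapunov_fin_two_companion_apply_one_one {g f : ℝ} (hg : g ≠ 0) (hf : f ≠ 0)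
    {P Q : Matrix (Fin 2) (Fin 2) ℂ}
    (hP : (!![0, 1; (g : ℂ), (f : ℂ)])ᴴ * P + P * !![0, 1; (g : ℂ), (f : ℂ)] = -Q)
    (hQ : Q 1 1 = 0) : P 1 1 = Q 0 0 / (2 * g * f) := by
  have e00 := congrFun (congrFun hP 0) 0
  have e11 := congrFun (congrFun hP 1) 1
  simp only [Fin.isValue, Matrix.add_apply, Matrix.mul_apply, conjTranspose_apply, of_apply,
    cons_val', cons_val_zero, cons_val_fin_one, RCLike.star_def, Fin.sum_univ_two, map_zero,
    zero_mul, cons_val_one, Complex.conj_ofReal, zero_add, mul_zero, Matrix.neg_apply, map_one,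
    one_mul, mul_one, hQ, neg_zero] at e00 e11
  rw [eq_div_iff (by simp [hg, hf])]
  linear_combination -e00 + (g : ℂ) * e11

theorem vehicular_lyapunov (g f : ℝ) (hg : g < 0) (hf : f < 0) (c : ℂ) :
    (∀ μ ∈ spectrum ℂ (!![0, 1; (g : ℂ), (f : ℂ)]), μ.re < 0) ∧
      ∀ P : Matrix (Fin 2) (Fin 2) ℂ,
        (!![0, 1; (g : ℂ), (f : ℂ)])ᴴ * P + P * !![0, 1; (g : ℂ), (f : ℂ)] =
          -((!![c, 0] : Matrix (Fin 1) (Fin 2) ℂ)ᴴ * !![c, 0]) →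
        P 1 1 = (‖c‖ ^ 2 / (2 * g * f) : ℝ) := by
  refine ⟨fun μ hμ ↦ ?_, fun P hP ↦ ?_⟩
  · exact Complex.re_neg_of_sq_sub_mul_sub_eq_zero hg hf
      ((mem_spectrum_fin_two_companion_iff _ _ μ).mp hμ)
  · have hQ00 : ((!![c, 0] : Matrix (Fin 1) (Fin 2) ℂ)ᴴ * !![c, 0]) 0 0 = (‖c‖ ^ 2 : ℝ) := by
      simp [Matrix.mul_apply, Complex.conj_mul']
    rw [lyapunov_fin_two_companion_apply_one_one hg.ne hf.ne hP (by simp [Matrix.mul_apply]),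
      hQ00]
    norm_cast
end

section
/- Let ĝ, f̂ be negative reals. For A = [[0,1],[ĝ,f̂]] and H = [ĝ, f̂] (control-effort output), the solution P = [[x,z],[z̄,y]] of A*P + PA = -H*H satisfies y = (1/2)·(-f̂ + ĝ/f̂), which is nonnegative. -/
/-! Only the two diagonal entries of the Lyapunov equation matter: the `(0,0)` entry reads
`g (p₀₁ + p₁₀) = -g²`, fixing `p₀₁ + p₁₀ = -g`, and the `(1,1)` entry
`p₀₁ + p₁₀ + 2 f p₁₁ = -f²` then determines `p₁₁ = (g - f²) / (2f)`. -/

open Matrix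

section CompanionLyapunov

variable (g f : ℝ) (P : Matrix (Fin 2) (Fin 2) ℂ)

lemma companion_lyapunov_apply_zero_zero :
    ((!![0, 1; (g : ℂ), (f : ℂ)])ᴴ * P + P * !![0, 1; (g : ℂ), (f : ℂ)]) 0 0 =
      g * (P 0 1 + P 1 0) := by
  simp [mul_apply, Fin.sum_univ_two, conjTranspose_apply]
  ring

lemma companion_lyapunov_apply_one_one :
    ((!![0, 1; (g : ℂ), (f : ℂ)])ᴴ * P + P * !![0, 1; (g : ℂ), (f : ℂ)]) 1 1 =
      P 0 1 + P 1 0 + 2 * f * P 1 1 := by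
  simp [mul_apply, Fin.sum_univ_two, conjTranspose_apply]
  ring

lemma neg_gram_row_apply_zero_zero :
    (-((!![(g : ℂ), (f : ℂ)] : Matrix (Fin 1) (Fin 2) ℂ)ᴴ * !![(g : ℂ), (f : ℂ)])) 0 0 =
      -(g : ℂ) ^ 2 := by
  simp [mul_apply, conjTranspose_apply, sq]

lemma neg_gram_row_apply_one_one :
    (-((!![(g : ℂ), (f : ℂ)] : Matrix (Fin 1) (Fin 2) ℂ)ᴴ * !![(g : ℂ), (f : ℂ)])) 1 1 =
      -(f : ℂ) ^ 2 := by
  simp [mul_apply, conjTranspose_apply, sq]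

end CompanionLyapunov

lemma entry_eq_of_lyapunov_diag {g f : ℝ} (hg : g ≠ 0) (hf : f ≠ 0) {p₀₁ p₁₀ p₁₁ : ℂ}
    (h₀₀ : g * (p₀₁ + p₁₀) = -(g : ℂ) ^ 2) (h₁₁ : p₀₁ + p₁₀ + 2 * f * p₁₁ = -(f : ℂ) ^ 2) :
    p₁₁ = (((1 / 2) * (-f + g / f) : ℝ) : ℂ) := by
  have hgC : (g : ℂ) ≠ 0 := by exact_mod_cast hg
  have hfC : (f : ℂ) ≠ 0 := by exact_mod_cast hf
  have hsum : p₀₁ + p₁₀ = -g := mul_left_cancel₀ hgC (by linear_combination h₀₀)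
  push_cast
  field_simp
  linear_combination h₁₁ - hsum

lemma half_neg_add_div_nonneg {g f : ℝ} (hg : g ≤ 0) (hf : f ≤ 0) :
    0 ≤ (1 / 2) * (-f + g / f) := by
  have : 0 ≤ g / f := div_nonneg_of_nonpos hg hf
  linarith

theorem control_effort_lyapunov (g f : ℝ) (hg : g < 0) (hf : f < 0) :
    ∀ P : Matrix (Fin 2) (Fin 2) ℂ,
      (!![0, 1; (g : ℂ), (f : ℂ)])ᴴ * P + P * !![0, 1; (g : ℂ), (f : ℂ)] =
        -((!![(g : ℂ), (f : ℂ)] : Matrix (Fin 1) (Fin 2) ℂ)ᴴ * !![(g : ℂ), (f : ℂ)]) →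
      P 1 1 = (((1 / 2) * (-f + g / f) : ℝ) : ℂ) ∧ 0 ≤ (1 / 2) * (-f + g / f) := by
  intro P hP
  have h₀₀ := congrFun (congrFun hP 0) 0
  have h₁₁ := congrFun (congrFun hP 1) 1
  rw [companion_lyapunov_apply_zero_zero, neg_gram_row_apply_zero_zero] at h₀₀
  rw [companion_lyapunov_apply_one_one, neg_gram_row_apply_one_one] at h₁₁
  exact ⟨entry_eq_of_lyapunov_diag hg.ne hf.ne h₀₀ h₁₁, half_neg_add_div_nonneg hg.le hf.le⟩
end
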